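/- Trivariate model pmf: let λ_1, λ_2, λ_3 > 0 and weights ω_{21}, ω_{31}, ω_{32} ∈ [0,1] with ω_{21} ≤ 1 and ω_{31} + ω_{32} ≤ 1; set ω_{22} = 1 − ω_{21} and ω_{33} = 1 − ω_{31} − ω_{32}. On (0,1)^3 with the product measure μ^3 define X_1(u) = q_{λ_1}(u_1), X_2(u) = q_{ω_{21}λ_2}(u_1) + q_{ω_{22}λ_2}(u_2), X_3(u) = q_{ω_{31}λ_3}(u_1) + q_{ω_{32}λ_3}(u_2) + q_{ω_{33}λ_3}(u_3). Then for all x_1, x_2, x_3 ∈ ℕ, μ^3{u : X_1 = x_1, X_2 = x_2, X_3 = x_3} = Σ_{z_{22}=0}^{x_2} Σ_{z_{32}=0}^{x_3} Σ_{z_{33}=0}^{x_3−z_{32}} c_3(x_1, x_2 − z_{22}, x_3 − z_{32} − z_{33}) · c_2(z_{22}, z_{32}) · g_{ω_{33}λ_3}(z_{33}), where c_3(y_1,y_2,y_3) = max(0, min{G_{λ_1}(y_1), G_{ω_{21}λ_2}(y_2), G_{ω_{31}λ_3}(y_3)} − max{G_{λ_1}(y_1−1), G_{ω_{21}λ_2}(y_2−1),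 G_{ω_{31}λ_3}(y_3−1)}), c_2(y_1,y_2) = max(0, min{G_{ω_{22}λ_2}(y_1), G_{ω_{32}λ_3}(y_2)} − max{G_{ω_{22}λ_2}(y_1−1), G_{ω_{32}λ_3}(y_2−1)}), with the convention G(−1) = 0, and g_θ(z) = e^{−θ} θ^z / z!. -/

import Mathlib

open MeasureTheory

/-- The uniform probability measure on the open interval (0,1):
Lebesgue measure restricted to (0,1). -/
noncomputable def unif : Measure ℝ := volume.restrict (Set.Ioo (0 : ℝ) 1)

/-- The quantile transform of a cdf `F` on ℕ: `q_F(u) = min {n : u ≤ F n}`. -/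
noncomputable def qt (F : ℕ → ℝ) (u : ℝ) : ℕ := sInf {n : ℕ | u ≤ F n}

/-- The Poisson(λ) cumulative distribution function on ℕ. -/
noncomputable def poisCdf (l : ℝ) (n : ℕ) : ℝ :=
  ∑ k ∈ Finset.range (n + 1), Real.exp (-l) * l ^ k / (Nat.factorial k)

/-- The Poisson(λ) probability mass function on ℕ. -/
noncomputable def poisPmf (l : ℝ) (n : ℕ) : ℝ :=
  Real.exp (-l) * l ^ n / (Nat.factorial n)

/-- `F(n-1)` with the convention `F(-1) = 0`. -/
noncomputable def cdfm1 (F : ℕ → ℝ) (n : ℕ) : ℝ := if n = 0 then 0 else F (n - 1)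

/-- The product measure μ^d of the uniform measure on (0,1) over coordinates. -/
noncomputable def pmeas (d : ℕ) : Measure (Fin d → ℝ) := Measure.pi (fun _ => unif)

/-- Component `i` of the MP_d(Λ,Ω) vector: `X_i(u) = Σ_{j ≤ i} q_{ω_{ij} λ_i}(u_j)`. -/
noncomputable def mpX (d : ℕ) (lam : Fin d → ℝ) (om : Fin d → Fin d → ℝ)
    (i : Fin d) (u : Fin d → ℝ) : ℕ :=
  ∑ j ∈ Finset.Iic i, qt (poisCdf (om i j * lam i)) (u j)

/-!
For a cdf `F` on `ℕ` with limit `1`, the quantile transform sends `u ∈ (0,1)` to `n` exactly when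
`F (n - 1) < u ≤ F n`, so finitely many equations `q_{F_i}(u) = n_i` on one coordinate cut out the
interval `(max_i F_i (n_i - 1), min_i F_i n_i]`, of uniform measure `(min - max)⁺`. Splitting the
event according to `z22 = q_{ω₂₂λ₂}(u₂)`, `z32 = q_{ω₃₂λ₃}(u₂)` and `z33 = q_{ω₃₃λ₃}(u₃)` fixes the
value of every quantile transform involved, and writes the event as a disjoint union of boxes whose
product measure is the product of the three interval lengths.
-/

open Set Filter Topology

lemma measure_eq_sum_measure_inter_preimage {α β : Type*} [MeasurableSpace α]
    [MeasurableSpace β] [MeasurableSingletonClass β] (μ : Measure α) {E : Set α} {f : α → β}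
    (hf : Measurable f) (s : Finset β) (hE : ∀ u ∈ E, f u ∈ s) :
    μ E = ∑ b ∈ s, μ (E ∩ f ⁻¹' {b}) := by
  have := sum_measure_preimage_singleton (μ := μ.restrict E) s
    fun b _ => hf (measurableSet_singleton b)
  rw [Measure.restrict_apply (hf s.measurableSet), (inter_eq_right (s := f ⁻¹' s)).2 hE] at this
  rw [← this]
  refine Finset.sum_congr rfl fun b _ => ?_
  rw [Measure.restrict_apply (hf (measurableSet_singleton b)), inter_comm]

structure IsNatCdf (F : ℕ → ℝ) : Prop where
  mono : Monotone F
  nonneg : ∀ n, 0 ≤ F n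
  tendsto_one : Tendsto F atTop (𝓝 1)

namespace IsNatCdf

variable {F : ℕ → ℝ}

lemma le_one (hF : IsNatCdf F) (n : ℕ) : F n ≤ 1 :=
  hF.mono.ge_of_tendsto hF.tendsto_one n

lemma cdfm1_nonneg (hF : IsNatCdf F) (n : ℕ) : 0 ≤ cdfm1 F n := by
  unfold cdfm1
  split_ifs
  exacts [le_rfl, hF.nonneg _]

lemma qt_eq_iff (hF : IsNatCdf F) {u : ℝ} (hu : u ∈ Ioo 0 1) (n : ℕ) :
    qt F u = n ↔ u ∈ Ioc (cdfm1 F n) (F n) := by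
  cases n with
  | zero =>
    obtain ⟨m, hm⟩ := (hF.tendsto_one.eventually (eventually_ge_nhds hu.2)).exists
    -- excludes the junk value `sInf ∅ = 0`
    have : ¬ ∀ j, F j < u := fun h => (h m).not_ge hm
    simp [qt, cdfm1, Nat.sInf_eq_zero, hu.1, Set.eq_empty_iff_forall_notMem, this]
  | succ k =>
    have hclosed : ∀ m k, m ≤ k → m ∈ {j | u ≤ F j} → k ∈ {j | u ≤ F j} :=
      fun m k hmk hm => hm.trans (hF.mono hmk)
    simp [qt, cdfm1, Nat.sInf_upward_closed_eq_succ_iff hclosed, and_comm]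

lemma setOf_qt_eq_ae_eq (hF : IsNatCdf F) (n : ℕ) :
    {u | qt F u = n} =ᵐ[unif] Ioc (cdfm1 F n) (F n) := by
  filter_upwards [ae_restrict_mem measurableSet_Ioo] with u hu
  exact propext (hF.qt_eq_iff hu n)

end IsNatCdf

lemma measurable_qt {F : ℕ → ℝ} (hF : Monotone F) : Measurable (qt F) := by
  refine measurable_to_countable' fun n => ?_
  cases n with
  | zero =>
    -- `sInf ∅ = 0`: the fibre of `0` also contains every `u` lying above all values of `F`.
    have : qt F ⁻¹' {0} = Iic (F 0) ∪ ⋂ m, Ioi (F m) := by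
      ext u; simp [qt, Nat.sInf_eq_zero, Set.eq_empty_iff_forall_notMem]
    rw [this]
    exact measurableSet_Iic.union (MeasurableSet.iInter fun _ => measurableSet_Ioi)
  | succ k =>
    have hclosed : ∀ m k, m ≤ k → ∀ u : ℝ, m ∈ {j | u ≤ F j} → k ∈ {j | u ≤ F j} :=
      fun m k hmk u hm => hm.trans (hF hmk)
    have : qt F ⁻¹' {k + 1} = Ioc (F k) (F (k + 1)) := by
      ext u; simp [qt, Nat.sInf_upward_closed_eq_succ_iff (hclosed · · · u), and_comm]
    rw [this]
    exact measurableSet_Ioc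

instance : IsProbabilityMeasure unif :=
  ⟨by rw [unif, Measure.restrict_apply_univ, Real.volume_Ioo, sub_zero, ENNReal.ofReal_one]⟩

lemma unif_Ioc {a b : ℝ} (ha : 0 ≤ a) (hb : b ≤ 1) : unif (Ioc a b) = ENNReal.ofReal (b - a) := by
  have hsub : Ioc a b ⊆ Icc 0 1 := fun x hx => ⟨ha.trans hx.1.le, hx.2.trans hb⟩
  rw [unif, Measure.restrict_congr_set Ioo_ae_eq_Icc, Measure.restrict_eq_self _ hsub,
    Real.volume_Ioc]

section Cells

variable {F G H : ℕ → ℝ}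

lemma unif_qt_eq (hF : IsNatCdf F) (n : ℕ) :
    unif {u | qt F u = n} = ENNReal.ofReal (F n - cdfm1 F n) := by
  rw [measure_congr (hF.setOf_qt_eq_ae_eq n), unif_Ioc (hF.cdfm1_nonneg n) (hF.le_one n)]

lemma unif_qt_eq_and_qt_eq (hF : IsNatCdf F) (hG : IsNatCdf G) (n m : ℕ) :
    unif {u | qt F u = n ∧ qt G u = m}
      = ENNReal.ofReal (min (F n) (G m) - max (cdfm1 F n) (cdfm1 G m)) := by
  rw [ofPred_and, measure_congr ((hF.setOf_qt_eq_ae_eq n).inter (hG.setOf_qt_eq_ae_eq m)),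
    Ioc_inter_Ioc, unif_Ioc (le_max_of_le_left (hF.cdfm1_nonneg n))
      (min_le_of_left_le (hF.le_one n))]

lemma unif_qt_eq_and_qt_eq_and_qt_eq (hF : IsNatCdf F) (hG : IsNatCdf G) (hH : IsNatCdf H)
    (n m k : ℕ) :
    unif {u | qt F u = n ∧ qt G u = m ∧ qt H u = k}
      = ENNReal.ofReal (min (F n) (min (G m) (H k))
          - max (cdfm1 F n) (max (cdfm1 G m) (cdfm1 H k))) := by
  rw [ofPred_and, ofPred_and, measure_congr ((hF.setOf_qt_eq_ae_eq n).inter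
      ((hG.setOf_qt_eq_ae_eq m).inter (hH.setOf_qt_eq_ae_eq k))),
    Ioc_inter_Ioc, Ioc_inter_Ioc, unif_Ioc (le_max_of_le_left (hF.cdfm1_nonneg n))
      (min_le_of_left_le (hF.le_one n))]

end Cells

lemma poisCdf_succ (l : ℝ) (n : ℕ) : poisCdf l (n + 1) = poisCdf l n + poisPmf l (n + 1) :=
  Finset.sum_range_succ _ _

lemma poisCdf_sub_cdfm1 (l : ℝ) (n : ℕ) : poisCdf l n - cdfm1 (poisCdf l) n = poisPmf l n := by
  cases n with
  | zero => simp [cdfm1, poisCdf, poisPmf]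
  | succ n => simp [cdfm1, poisCdf_succ]

lemma poisPmf_nonneg {l : ℝ} (hl : 0 ≤ l) (n : ℕ) : 0 ≤ poisPmf l n := by
  unfold poisPmf; positivity

lemma isNatCdf_poisCdf {l : ℝ} (hl : 0 ≤ l) : IsNatCdf (poisCdf l) where
  mono := monotone_nat_of_le_succ fun n => by
    rw [poisCdf_succ]; linarith [poisPmf_nonneg hl (n + 1)]
  nonneg n := Finset.sum_nonneg fun k _ => poisPmf_nonneg hl k
  tendsto_one := by
    have := ProbabilityTheory.hasSum_one_poissonMeasure l.toNNReal
    rw [Real.coe_toNNReal _ hl] at this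
    exact this.tendsto_sum_nat.comp (tendsto_add_atTop_nat 1)

lemma pmeas_three_setOf (A B C : Set ℝ) :
    pmeas 3 {u | u 0 ∈ A ∧ u 1 ∈ B ∧ u 2 ∈ C} = unif A * unif B * unif C := by
  have : {u : Fin 3 → ℝ | u 0 ∈ A ∧ u 1 ∈ B ∧ u 2 ∈ C} = univ.pi ![A, B, C] := by
    ext u; simp [Fin.forall_fin_succ]
  rw [this, pmeas, Measure.pi_pi, Fin.prod_univ_three]
  rfl

section Trivariate

variable {F1 F21 F22 F31 F32 F33 : ℕ → ℝ}

lemma pmeas_mp3_eq_sum_cells (h22 : Monotone F22) (h32 : Monotone F32) (h33 : Monotone F33)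
    (x1 x2 x3 : ℕ) :
    pmeas 3 {u | qt F1 (u 0) = x1 ∧ qt F21 (u 0) + qt F22 (u 1) = x2 ∧
        qt F31 (u 0) + qt F32 (u 1) + qt F33 (u 2) = x3}
      = ∑ z22 ∈ Finset.range (x2 + 1), ∑ z32 ∈ Finset.range (x3 + 1),
          ∑ z33 ∈ Finset.range (x3 - z32 + 1),
            pmeas 3 {u |
              u 0 ∈ {t | qt F1 t = x1 ∧ qt F21 t = x2 - z22 ∧ qt F31 t = x3 - z32 - z33} ∧
              u 1 ∈ {t | qt F22 t = z22 ∧ qt F32 t = z32} ∧ u 2 ∈ {t | qt F33 t = z33}} := by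
  have hq {F : ℕ → ℝ} (hF : Monotone F) (i : Fin 3) :
      Measurable fun u : Fin 3 → ℝ => qt F (u i) :=
    (measurable_qt hF).comp (measurable_pi_apply i)
  rw [measure_eq_sum_measure_inter_preimage _ (hq h22 1) (Finset.range (x2 + 1))
    fun u hu => by simp only [mem_ofPred_eq, Finset.mem_range] at hu ⊢; omega]
  refine Finset.sum_congr rfl fun z22 hz22 => ?_
  rw [measure_eq_sum_measure_inter_preimage _ (hq h32 1) (Finset.range (x3 + 1))
    fun u hu => by
      simp only [mem_inter_iff, mem_preimage, mem_singleton_iff, mem_ofPred_eq,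
        Finset.mem_range] at hu ⊢
      omega]
  refine Finset.sum_congr rfl fun z32 hz32 => ?_
  rw [measure_eq_sum_measure_inter_preimage _ (hq h33 2) (Finset.range (x3 - z32 + 1))
    fun u hu => by
      simp only [mem_inter_iff, mem_preimage, mem_singleton_iff, mem_ofPred_eq,
        Finset.mem_range] at hu ⊢
      omega]
  refine Finset.sum_congr rfl fun z33 hz33 => congrArg _ ?_
  ext u
  simp only [Finset.mem_range] at hz22 hz32 hz33
  simp only [mem_inter_iff, mem_preimage, mem_singleton_iff, mem_ofPred_eq]
  omega

lemma pmeas_mp3_eq_sum (h1 : IsNatCdf F1) (h21 : IsNatCdf F21) (h22 : IsNatCdf F22)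
    (h31 : IsNatCdf F31) (h32 : IsNatCdf F32) (h33 : IsNatCdf F33) (x1 x2 x3 : ℕ) :
    pmeas 3 {u | qt F1 (u 0) = x1 ∧ qt F21 (u 0) + qt F22 (u 1) = x2 ∧
        qt F31 (u 0) + qt F32 (u 1) + qt F33 (u 2) = x3}
      = ∑ z22 ∈ Finset.range (x2 + 1), ∑ z32 ∈ Finset.range (x3 + 1),
          ∑ z33 ∈ Finset.range (x3 - z32 + 1),
            ENNReal.ofReal (min (F1 x1) (min (F21 (x2 - z22)) (F31 (x3 - z32 - z33)))
                - max (cdfm1 F1 x1) (max (cdfm1 F21 (x2 - z22)) (cdfm1 F31 (x3 - z32 - z33))))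
              * ENNReal.ofReal (min (F22 z22) (F32 z32) - max (cdfm1 F22 z22) (cdfm1 F32 z32))
              * ENNReal.ofReal (F33 z33 - cdfm1 F33 z33) := by
  rw [pmeas_mp3_eq_sum_cells h22.mono h32.mono h33.mono]
  simp only [pmeas_three_setOf, unif_qt_eq_and_qt_eq_and_qt_eq h1 h21 h31,
    unif_qt_eq_and_qt_eq h22 h32, unif_qt_eq h33]

end Trivariate

theorem mp3_pmf_general (l1 l2 l3 : ℝ) (hl1 : 0 < l1) (hl2 : 0 < l2) (hl3 : 0 < l3)
    (w21 w31 w32 : ℝ)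
    (hw21 : 0 ≤ w21) (hw31 : 0 ≤ w31) (hw32 : 0 ≤ w32)
    (hw21' : w21 ≤ 1)
    (hw3 : w31 + w32 ≤ 1) (x1 x2 x3 : ℕ) :
    pmeas 3 {u : Fin 3 → ℝ |
        qt (poisCdf l1) (u 0) = x1 ∧
        qt (poisCdf (w21 * l2)) (u 0) + qt (poisCdf ((1 - w21) * l2)) (u 1) = x2 ∧
        qt (poisCdf (w31 * l3)) (u 0) + qt (poisCdf (w32 * l3)) (u 1)
          + qt (poisCdf ((1 - w31 - w32) * l3)) (u 2) = x3}
      = ENNReal.ofReal (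
          ∑ z22 ∈ Finset.range (x2 + 1), ∑ z32 ∈ Finset.range (x3 + 1),
            ∑ z33 ∈ Finset.range (x3 - z32 + 1),
              max 0 (min (poisCdf l1 x1)
                    (min (poisCdf (w21 * l2) (x2 - z22))
                      (poisCdf (w31 * l3) (x3 - z32 - z33)))
                  - max (cdfm1 (poisCdf l1) x1)
                      (max (cdfm1 (poisCdf (w21 * l2)) (x2 - z22))
                        (cdfm1 (poisCdf (w31 * l3)) (x3 - z32 - z33))))
                * max 0 (min (poisCdf ((1 - w21) * l2) z22) (poisCdf (w32 * l3) z32)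
                    - max (cdfm1 (poisCdf ((1 - w21) * l2)) z22)
                        (cdfm1 (poisCdf (w32 * l3)) z32))
                * poisPmf ((1 - w31 - w32) * l3) z33) := by
  have hl33 : 0 ≤ (1 - w31 - w32) * l3 := mul_nonneg (by linarith) hl3.le
  have hterm (a b : ℝ) (n : ℕ) : 0 ≤ max 0 a * max 0 b * poisPmf ((1 - w31 - w32) * l3) n :=
    mul_nonneg (mul_nonneg (le_max_left _ _) (le_max_left _ _)) (poisPmf_nonneg hl33 n)
  rw [pmeas_mp3_eq_sum (isNatCdf_poisCdf hl1.le) (isNatCdf_poisCdf (mul_nonneg hw21 hl2.le))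
    (isNatCdf_poisCdf (mul_nonneg (sub_nonneg.2 hw21') hl2.le))
    (isNatCdf_poisCdf (mul_nonneg hw31 hl3.le)) (isNatCdf_poisCdf (mul_nonneg hw32 hl3.le))
    (isNatCdf_poisCdf hl33)]
  rw [ENNReal.ofReal_sum_of_nonneg fun _ _ =>
    Finset.sum_nonneg fun _ _ => Finset.sum_nonneg fun _ _ => hterm _ _ _]
  refine Finset.sum_congr rfl fun z22 _ => ?_
  rw [ENNReal.ofReal_sum_of_nonneg fun _ _ => Finset.sum_nonneg fun _ _ => hterm _ _ _]
  refine Finset.sum_congr rfl fun z32 _ => ?_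
  rw [ENNReal.ofReal_sum_of_nonneg fun _ _ => hterm _ _ _]
  refine Finset.sum_congr rfl fun z33 _ => ?_
  rw [ENNReal.ofReal_mul (mul_nonneg (le_max_left _ _) (le_max_left _ _)),
    ENNReal.ofReal_mul (le_max_left _ _), poisCdf_sub_cdfm1]
  simp

/-- Trivariate MP model pmf: with `X₁(u) = q_{λ₁}(u₁)`,
`X₂(u) = q_{ω₂₁λ₂}(u₁) + q_{ω₂₂λ₂}(u₂)`,
`X₃(u) = q_{ω₃₁λ₃}(u₁) + q_{ω₃₂λ₃}(u₂) + q_{ω₃₃λ₃}(u₃)` on (0,1)³ with the product uniform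
measure, the joint pmf is a triple sum of comonotonic pmfs times a Poisson pmf. -/
theorem mp3_pmf (l1 l2 l3 : ℝ) (hl1 : 0 < l1) (hl2 : 0 < l2) (hl3 : 0 < l3)
    (w21 w31 w32 : ℝ)
    (hw21 : 0 ≤ w21) (hw31 : 0 ≤ w31) (hw32 : 0 ≤ w32)
    (hw21' : w21 ≤ 1) (hw31' : w31 ≤ 1) (hw32' : w32 ≤ 1)
    (hw3 : w31 + w32 ≤ 1) (x1 x2 x3 : ℕ) :
    pmeas 3 {u : Fin 3 → ℝ |
        qt (poisCdf l1) (u 0) = x1 ∧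
        qt (poisCdf (w21 * l2)) (u 0) + qt (poisCdf ((1 - w21) * l2)) (u 1) = x2 ∧
        qt (poisCdf (w31 * l3)) (u 0) + qt (poisCdf (w32 * l3)) (u 1)
          + qt (poisCdf ((1 - w31 - w32) * l3)) (u 2) = x3}
      = ENNReal.ofReal (
          ∑ z22 ∈ Finset.range (x2 + 1), ∑ z32 ∈ Finset.range (x3 + 1),
            ∑ z33 ∈ Finset.range (x3 - z32 + 1),
              max 0 (min (poisCdf l1 x1)
                    (min (poisCdf (w21 * l2) (x2 - z22))
                      (poisCdf (w31 * l3) (x3 - z32 - z33)))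
                  - max (cdfm1 (poisCdf l1) x1)
                      (max (cdfm1 (poisCdf (w21 * l2)) (x2 - z22))
                        (cdfm1 (poisCdf (w31 * l3)) (x3 - z32 - z33))))
                * max 0 (min (poisCdf ((1 - w21) * l2) z22) (poisCdf (w32 * l3) z32)
                    - max (cdfm1 (poisCdf ((1 - w21) * l2)) z22)
                        (cdfm1 (poisCdf (w32 * l3)) z32))
                * poisPmf ((1 - w31 - w32) * l3) z33) :=
  mp3_pmf_general l1 l2 l3 hl1 hl2 hl3 w21 w31 w32 hw21 hw31 hw32 hw21' hw3 x1 x2 x3
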